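/- (Proposition 1: nonexistence for diagonal D.) Assume m ≥ 2 and fix ε ∈ (0,1). For the (d_v, d_c, m) nonbinary LDPC ensemble functions f(·; ε) and g, there is no diagonal m×m matrix D with strictly positive diagonal entries for which there exist differentiable functions F, G : ℝ^m → ℝ with F(0) = 0, G(0) = 0, and gradients (as row vectors) F′(y) = f(y; ε)·D for all y ∈ Y and G′(x) = g(x)·D for all x ∈ Y. -/

import Mathlib

/-!
If `F` had gradient `f(·; ε) · D` on the cube `Y`, its second derivative at the corner `y = 1`
would exist (`f` is polynomial) and be symmetric (`Y` is convex with nonempty interior), i.e.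
`d_s ∂f_s/∂y_t = d_t ∂f_t/∂y_s` there. At `y = 1` we have `ỹ = e_m`, the unit of `⊡`, so the
derivative of `f∘(·; ε)` at `ỹ` is `c (p∘ ⊡ ·)`, with `c` the number of factors of the `⊡`-power.
Since `(a ⊡ b)_m = a_m b_m`, this gives `∂f_m/∂y_{m-1} = 0`, whereas
`∂f_{m-1}/∂y_m = c p∘_{m-1} (1 - 1/N) > 0`, where `N ≥ 2` is the number of hyperplanes of `𝔽₂^m`.
-/

open scoped BigOperators

noncomputable section

/-- Number of `j`-dimensional subspaces `U` of `𝔽₂^m` whose intersection with `W`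
has dimension `k`. -/
def numInter (m j k : ℕ) (W : Submodule (ZMod 2) (Fin m → ZMod 2)) : ℕ :=
  Set.ncard {U : Submodule (ZMod 2) (Fin m → ZMod 2) |
    Module.finrank (ZMod 2) U = j ∧ Module.finrank (ZMod 2) ↥(U ⊓ W) = k}

/-- Number of `j`-dimensional subspaces `U` of `𝔽₂^m` whose sum with `W`
has dimension `k`. -/
def numSum (m j k : ℕ) (W : Submodule (ZMod 2) (Fin m → ZMod 2)) : ℕ :=
  Set.ncard {U : Submodule (ZMod 2) (Fin m → ZMod 2) |
    Module.finrank (ZMod 2) U = j ∧ Module.finrank (ZMod 2) ↥(U ⊔ W) = k}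

/-- Number of `j`-dimensional subspaces of `𝔽₂^m`. -/
def numDim (m j : ℕ) : ℕ :=
  Set.ncard {U : Submodule (ZMod 2) (Fin m → ZMod 2) | Module.finrank (ZMod 2) U = j}

/-- A canonical `i`-dimensional subspace of `𝔽₂^m` (for `i ≤ m`): vectors supported on
the first `i` coordinates. -/
def stdW (m i : ℕ) : Submodule (ZMod 2) (Fin m → ZMod 2) :=
  Submodule.span (ZMod 2) {x | ∀ t : Fin m, i ≤ (t : ℕ) → x t = 0}

/-- `V^m_{i,j,k}`: probability that a uniformly random `j`-dimensional subspace `U`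
of `𝔽₂^m` satisfies `dim (U ⊓ W) = k`, for a fixed `i`-dimensional subspace `W`. -/
def Vprob (m i j k : ℕ) : ℝ := (numInter m j k (stdW m i) : ℝ) / (numDim m j : ℝ)

/-- `C^m_{i,j,k}`: probability that a uniformly random `j`-dimensional subspace `U`
of `𝔽₂^m` satisfies `dim (U ⊔ W) = k`, for a fixed `i`-dimensional subspace `W`. -/
def Cprob (m i j k : ℕ) : ℝ := (numSum m j k (stdW m i) : ℝ) / (numDim m j : ℝ)

/-- The operation `⊡`. -/
def boxdot (m : ℕ) (a b : Fin (m+1) → ℝ) : Fin (m+1) → ℝ :=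
  fun k => ∑ i : Fin (m+1), ∑ j : Fin (m+1), Vprob m i j k * a i * b j

/-- The operation `⊠`. -/
def boxtimes (m : ℕ) (a b : Fin (m+1) → ℝ) : Fin (m+1) → ℝ :=
  fun k => ∑ i : Fin (m+1), ∑ j : Fin (m+1), Cprob m i j k * a i * b j

/-- `boxdotPow m n a = ⊡^{n+1} a` (the `(n+1)`-fold `⊡`-product of `a` with itself). -/
def boxdotPow (m : ℕ) : ℕ → (Fin (m+1) → ℝ) → (Fin (m+1) → ℝ)
  | 0, a => a
  | n+1, a => boxdot m a (boxdotPow m n a)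

/-- `boxtimesPow m n a = ⊠^{n+1} a` (the `(n+1)`-fold `⊠`-product of `a` with itself). -/
def boxtimesPow (m : ℕ) : ℕ → (Fin (m+1) → ℝ) → (Fin (m+1) → ℝ)
  | 0, a => a
  | n+1, a => boxtimes m a (boxtimesPow m n a)

/-- `p∘(ε)`. -/
def pcirc (m : ℕ) (ε : ℝ) : Fin (m+1) → ℝ :=
  fun i => (m.choose i : ℝ) * ε ^ (i : ℕ) * (1 - ε) ^ (m - (i : ℕ))

/-- `f∘(y∘; ε) = p∘(ε) ⊡ (⊡^{d_v − 1} y∘)`. -/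
def fcirc (m dv : ℕ) (ε : ℝ) (y : Fin (m+1) → ℝ) : Fin (m+1) → ℝ :=
  boxdot m (pcirc m ε) (boxdotPow m (dv - 2) y)

/-- `g∘(x∘) = ⊠^{d_c − 1} x∘`. -/
def gcirc (m dc : ℕ) (x : Fin (m+1) → ℝ) : Fin (m+1) → ℝ :=
  boxtimesPow m (dc - 2) x

/-- Extension of `x ∈ ℝ^m` (indexed `1,…,m`) to `ℕ` with conventions `x_0 = 1`,
`x_i = 0` for `i > m`. -/
def extSeq (m : ℕ) (x : Fin m → ℝ) : ℕ → ℝ :=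
  fun i => if _h0 : i = 0 then 1 else if h : i ≤ m then x ⟨i - 1, by omega⟩ else 0

/-- `x̃ ∈ ℝ^{m+1}` with `x̃_i = x_i − x_{i+1}`. -/
def tilde (m : ℕ) (x : Fin m → ℝ) : Fin (m+1) → ℝ :=
  fun i => extSeq m x i - extSeq m x ((i : ℕ) + 1)

/-- `f(y; ε)_i = Σ_{k=i}^m f∘(ỹ; ε)_k` (here `i : Fin m` denotes the index `i+1 ∈ {1,…,m}`). -/
def fFun (m dv : ℕ) (ε : ℝ) (y : Fin m → ℝ) : Fin m → ℝ :=
  fun i => ∑ k : Fin (m+1), if (i : ℕ) + 1 ≤ (k : ℕ) then fcirc m dv ε (tilde m y) k else 0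

/-- `g(x)_i = Σ_{k=i}^m g∘(x̃)_k`. -/
def gFun (m dc : ℕ) (x : Fin m → ℝ) : Fin m → ℝ :=
  fun i => ∑ k : Fin (m+1), if (i : ℕ) + 1 ≤ (k : ℕ) then gcirc m dc (tilde m x) k else 0

/-- `p(ε)_i = Σ_{k=i}^m p∘_k(ε)`. -/
def pFun (m : ℕ) (ε : ℝ) : Fin m → ℝ :=
  fun i => ∑ k : Fin (m+1), if (i : ℕ) + 1 ≤ (k : ℕ) then pcirc m ε k else 0

/-- `X_ε = {x ∈ ℝ^m : 0 ≤ x_i ≤ p(ε)_i}`. -/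
def Xset (m : ℕ) (ε : ℝ) : Set (Fin m → ℝ) := {x | ∀ i, 0 ≤ x i ∧ x i ≤ pFun m ε i}

/-- `Y = [0,1]^m`. -/
def Yset (m : ℕ) : Set (Fin m → ℝ) := {y | ∀ i, 0 ≤ y i ∧ y i ≤ 1}

/-- The continuous linear map `v ↦ Σ_s c_s v_s`, i.e. the row vector `c` viewed as a
linear functional; used to express gradients. -/
def rowDeriv (m : ℕ) (c : Fin m → ℝ) : (Fin m → ℝ) →L[ℝ] ℝ :=
  ∑ s : Fin m, c s • (ContinuousLinearMap.proj s : (Fin m → ℝ) →L[ℝ] ℝ)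

/-- The potential function `U(x; ε) = g(x) D xᵀ − G(x) − F(g(x); ε)` (with `ε` fixed,
absorbed into `F`). -/
def Upot (m dc : ℕ) (D : Matrix (Fin m) (Fin m) ℝ) (F G : (Fin m → ℝ) → ℝ)
    (x : Fin m → ℝ) : ℝ :=
  (∑ a : Fin m, ∑ b : Fin m, gFun m dc x a * D a b * x b) - G x - F (gFun m dc x)

theorem Convex.mixed_partial_eq_of_hasFDerivAt_rowDeriv {m : ℕ} {s : Set (Fin m → ℝ)}
    (hs : Convex ℝ s) (hne : (interior s).Nonempty) {F : (Fin m → ℝ) → ℝ}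
    {c : (Fin m → ℝ) → Fin m → ℝ} (hF : ∀ y ∈ s, HasFDerivAt F (rowDeriv m (c y)) y)
    {x : Fin m → ℝ} (hx : x ∈ s) (hc : DifferentiableAt ℝ c x) {i j : Fin m} {a b : ℝ}
    (ha : HasDerivAt (fun h : ℝ => c (x + h • Pi.single i 1) j) a 0)
    (hb : HasDerivAt (fun h : ℝ => c (x + h • Pi.single j 1) i) b 0) : a = b := by
  set c' := fderiv ℝ c x
  have hline (v : Fin m → ℝ) : HasDerivAt (fun h : ℝ => c (x + h • v)) (c' v) 0 := by
    have hv : HasDerivAt (fun h : ℝ => x + h • v) v 0 := by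
      simpa using ((hasDerivAt_id (0 : ℝ)).smul_const v).const_add x
    exact hc.hasFDerivAt.comp_hasDerivAt_of_eq 0 hv (by simp)
  have hgrad : HasFDerivAt (fun y => rowDeriv m (c y))
      (∑ k, ((ContinuousLinearMap.proj k).comp c').smulRight (ContinuousLinearMap.proj k)) x := by
    unfold rowDeriv
    exact HasFDerivAt.fun_sum fun k _ => (hasFDerivAt_pi'.1 hc.hasFDerivAt k).smul_const
      (ContinuousLinearMap.proj k : (Fin m → ℝ) →L[ℝ] ℝ)
  have hsymm : c' (Pi.single i 1) j = c' (Pi.single j 1) i := by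
    simpa [Pi.single_apply] using hs.second_derivative_within_at_symmetric hne
      (fun y hy => hF y (interior_subset hy)) hx hgrad.hasFDerivWithinAt
      (Pi.single i 1) (Pi.single j 1)
  rw [ha.unique (hasDerivAt_pi.1 (hline _) j), hb.unique (hasDerivAt_pi.1 (hline _) i), hsymm]

section SubspaceCounting

variable {m : ℕ}

lemma mem_stdW {i : ℕ} {x : Fin m → ZMod 2} :
    x ∈ stdW m i ↔ ∀ t : Fin m, i ≤ (t : ℕ) → x t = 0 := by
  let S : Submodule (ZMod 2) (Fin m → ZMod 2) :=
    { carrier := {x | ∀ t : Fin m, i ≤ (t : ℕ) → x t = 0}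
      add_mem' := fun ha hb t ht => by simp [ha t ht, hb t ht]
      zero_mem' := fun _ _ => rfl
      smul_mem' := fun c x hx t ht => by simp [hx t ht] }
  exact SetLike.ext_iff.1 (Submodule.span_eq S) x

def stdWEquiv {i : ℕ} (hi : i ≤ m) : stdW m i ≃ₗ[ZMod 2] (Fin i → ZMod 2) where
  toFun x t := x.1 (Fin.castLE hi t)
  invFun y := ⟨fun t => if h : (t : ℕ) < i then y ⟨t, h⟩ else 0,
    mem_stdW.2 fun t ht => dif_neg (by omega)⟩
  map_add' _ _ := rfl
  map_smul' _ _ := rfl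
  left_inv x := by
    ext t
    by_cases h : (t : ℕ) < i
    · simp [h]
    · simp [h, mem_stdW.1 x.2 t (by omega)]
  right_inv y := by ext t; simp [t.2]

lemma finrank_stdW {i : ℕ} (hi : i ≤ m) : Module.finrank (ZMod 2) (stdW m i) = i := by
  rw [(stdWEquiv hi).finrank_eq, Module.finrank_fin_fun]

lemma stdW_self : stdW m m = ⊤ :=
  eq_top_iff.2 fun x _ => mem_stdW.2 fun t ht => absurd t.2 (by omega)

lemma numInter_eq_zero_of_lt {j k : ℕ} (W : Submodule (ZMod 2) (Fin m → ZMod 2)) (h : j < k) :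
    numInter m j k W = 0 := by
  rw [numInter, Set.ncard_eq_zero]
  refine Set.eq_empty_of_forall_notMem fun U ⟨hU, hUW⟩ => ?_
  have := Submodule.finrank_mono (inf_le_left : U ⊓ W ≤ U)
  omega

lemma numInter_eq_zero_of_finrank_lt {j k : ℕ} {W : Submodule (ZMod 2) (Fin m → ZMod 2)}
    (h : Module.finrank (ZMod 2) W < k) : numInter m j k W = 0 := by
  rw [numInter, Set.ncard_eq_zero]
  refine Set.eq_empty_of_forall_notMem fun U ⟨_, hUW⟩ => ?_
  have := Submodule.finrank_mono (inf_le_right : U ⊓ W ≤ W)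
  omega

lemma numInter_full (k : ℕ) (W : Submodule (ZMod 2) (Fin m → ZMod 2)) :
    numInter m m k W = if Module.finrank (ZMod 2) W = k then 1 else 0 := by
  have hset : {U : Submodule (ZMod 2) (Fin m → ZMod 2) | Module.finrank (ZMod 2) U = m ∧
      Module.finrank (ZMod 2) ↥(U ⊓ W) = k} =
      {U | U = ⊤ ∧ Module.finrank (ZMod 2) W = k} := by
    ext U
    have hU : Module.finrank (ZMod 2) U = m ↔ U = ⊤ :=
      ⟨fun h => Submodule.eq_top_of_finrank_eq (by simpa using h),
        fun h => by rw [h, finrank_top, Module.finrank_fin_fun]⟩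
    simp only [Set.mem_ofPred_eq, hU]
    constructor <;> rintro ⟨rfl, h⟩ <;> rw [top_inf_eq] at * <;> exact ⟨rfl, h⟩
  rw [numInter, hset]
  split_ifs with hk <;> simp [hk]

lemma numInter_top (j k : ℕ) : numInter m j k ⊤ = if j = k then numDim m j else 0 := by
  have hset : ∀ U : Submodule (ZMod 2) (Fin m → ZMod 2),
      Module.finrank (ZMod 2) ↥(U ⊓ ⊤) = Module.finrank (ZMod 2) U := fun U => by
    rw [inf_top_eq]
  simp only [numInter, numDim, hset]
  split_ifs with hjk
  · simp [hjk]
  · rw [Set.ncard_eq_zero]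
    exact Set.eq_empty_of_forall_notMem fun U ⟨h1, h2⟩ => hjk (h1.symm.trans h2)

lemma numInter_finrank_self (W : Submodule (ZMod 2) (Fin m → ZMod 2)) :
    numInter m (Module.finrank (ZMod 2) W) (Module.finrank (ZMod 2) W) W = 1 := by
  rw [numInter, Set.ncard_eq_one]
  refine ⟨W, Set.ext fun U => ⟨fun ⟨h1, h2⟩ => ?_, ?_⟩⟩
  · have hUW : U ⊓ W = U := Submodule.eq_of_le_of_finrank_le inf_le_left (by omega)
    exact Submodule.eq_of_le_of_finrank_le (hUW ▸ inf_le_right) (by omega)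
  · rintro rfl
    exact ⟨rfl, by rw [inf_idem]⟩

lemma numDim_pos {j : ℕ} (hj : j ≤ m) : 0 < numDim m j :=
  (Set.ncard_pos).2 ⟨stdW m j, finrank_stdW hj⟩

lemma numDim_self : numDim m m = 1 := by
  simpa [numInter_top] using numInter_full (m := m) m ⊤

lemma two_le_numDim_hyperplane (n : ℕ) : 2 ≤ numDim (n + 2) (n + 1) := by
  have hker (c : Fin (n + 2)) : Module.finrank (ZMod 2)
      (LinearMap.ker (LinearMap.proj (R := ZMod 2) (φ := fun _ => ZMod 2) c)) = n + 1 := by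
    have hc : LinearMap.proj (R := ZMod 2) (φ := fun _ : Fin (n + 2) => ZMod 2) c ≠ 0 :=
      fun h => by simpa using LinearMap.congr_fun h (Pi.single c 1)
    simpa using Module.Dual.finrank_ker_add_one_of_ne_zero hc
  refine (Set.one_lt_ncard).2 ⟨_, hker 0, _, hker 1, fun h => ?_⟩
  simpa using SetLike.ext_iff.1 h (Pi.single 1 1)

lemma Vprob_eq_zero_of_snd_lt (i : ℕ) {j k : ℕ} (h : j < k) : Vprob m i j k = 0 := by
  simp [Vprob, numInter_eq_zero_of_lt _ h]

lemma Vprob_eq_zero_of_fst_lt {i : ℕ} (j : ℕ) {k : ℕ} (hi : i ≤ m) (h : i < k) :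
    Vprob m i j k = 0 := by
  simp [Vprob, numInter_eq_zero_of_finrank_lt ((finrank_stdW hi).trans_lt h)]

lemma Vprob_snd_full {i : ℕ} (hi : i ≤ m) (k : ℕ) :
    Vprob m i m k = if i = k then 1 else 0 := by
  rw [Vprob, numInter_full, finrank_stdW hi, numDim_self]
  split_ifs <;> simp

lemma Vprob_fst_full {j : ℕ} (hj : j ≤ m) (k : ℕ) :
    Vprob m m j k = if j = k then 1 else 0 := by
  rw [Vprob, stdW_self, numInter_top]
  split_ifs
  · exact div_self (Nat.cast_ne_zero.2 (numDim_pos hj).ne')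
  · simp

lemma Vprob_self {i : ℕ} (hi : i ≤ m) : Vprob m i i i = (numDim m i : ℝ)⁻¹ := by
  have := numInter_finrank_self (stdW m i)
  rw [finrank_stdW hi] at this
  rw [Vprob, this, Nat.cast_one, one_div]

end SubspaceCounting

section Boxdot

variable {m : ℕ}

lemma boxdot_single_last_right (a : Fin (m + 1) → ℝ) :
    boxdot m a (Pi.single (Fin.last m) 1) = a := by
  ext k
  simp [boxdot, Pi.single_apply, Vprob_snd_full (Nat.lt_succ_iff.1 (Fin.is_lt _)), Fin.val_eq_val]

lemma boxdot_single_last_left (b : Fin (m + 1) → ℝ) :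
    boxdot m (Pi.single (Fin.last m) 1) b = b := by
  ext k
  simp [boxdot, Pi.single_apply, Vprob_fst_full (Nat.lt_succ_iff.1 (Fin.is_lt _)), Fin.val_eq_val]

lemma boxdotPow_single_last (n : ℕ) :
    boxdotPow m n (Pi.single (Fin.last m) 1) = Pi.single (Fin.last m) 1 := by
  induction n with
  | zero => rfl
  | succ n ih => rw [boxdotPow, ih, boxdot_single_last_left]

lemma boxdot_apply_last (a b : Fin (m + 1) → ℝ) :
    boxdot m a b (Fin.last m) = a (Fin.last m) * b (Fin.last m) := by
  have hne (i : Fin m) : (i : ℕ) ≠ m := i.is_lt.ne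
  simp [boxdot, Fin.sum_univ_castSucc, Vprob_eq_zero_of_snd_lt _ (Fin.is_lt _),
    Vprob_snd_full (Nat.lt_succ_iff.1 (Fin.is_lt _)), hne]

lemma boxdot_zero_left (b : Fin (m + 1) → ℝ) : boxdot m 0 b = 0 := by
  ext k
  simp [boxdot]

lemma boxdot_smul_right (a b : Fin (m + 1) → ℝ) (r : ℝ) :
    boxdot m a (r • b) = r • boxdot m a b := by
  ext k
  simp only [boxdot, Pi.smul_apply, smul_eq_mul, Finset.mul_sum]
  exact Finset.sum_congr rfl fun i _ => Finset.sum_congr rfl fun j _ => by ring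

lemma boxdot_sub_right (a b c : Fin (m + 1) → ℝ) :
    boxdot m a (b - c) = boxdot m a b - boxdot m a c := by
  ext k
  simp [boxdot, mul_sub]

lemma boxdot_single_right (a : Fin (m + 1) → ℝ) (j k : Fin (m + 1)) :
    boxdot m a (Pi.single j 1) k = ∑ i : Fin (m + 1), Vprob m i j k * a i := by
  simp [boxdot, Pi.single_apply]

lemma differentiable_boxdot {E : Type*} [NormedAddCommGroup E] [NormedSpace ℝ E]
    {a b : E → Fin (m + 1) → ℝ} (ha : Differentiable ℝ a) (hb : Differentiable ℝ b) :
    Differentiable ℝ (fun x => boxdot m (a x) (b x)) := by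
  unfold boxdot
  rw [differentiable_pi] at *
  intro k
  fun_prop

lemma differentiable_boxdotPow (n : ℕ) : Differentiable ℝ (boxdotPow m n) := by
  induction n with
  | zero => exact differentiable_id
  | succ n ih => exact differentiable_boxdot differentiable_id ih

lemma HasDerivAt.boxdot {a b : ℝ → Fin (m + 1) → ℝ} {a' b' : Fin (m + 1) → ℝ} {t : ℝ}
    (ha : HasDerivAt a a' t) (hb : HasDerivAt b b' t) :
    HasDerivAt (fun t => boxdot m (a t) (b t)) (boxdot m a' (b t) + boxdot m (a t) b') t := by
  rw [hasDerivAt_pi] at *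
  intro k
  have := HasDerivAt.fun_sum (u := Finset.univ) fun (i : Fin (m + 1)) _ =>
    HasDerivAt.fun_sum (u := Finset.univ) fun (j : Fin (m + 1)) _ =>
      ((ha i).const_mul (Vprob m i j k)).mul (hb j)
  convert this using 1
  · ext; simp [_root_.boxdot, mul_assoc]
  · simp [_root_.boxdot, ← Finset.sum_add_distrib]

lemma HasDerivAt.boxdotPow_of_eq_single_last {c : ℝ → Fin (m + 1) → ℝ}
    {c' : Fin (m + 1) → ℝ} {t : ℝ} (hc : HasDerivAt c c' t)
    (ht : c t = Pi.single (Fin.last m) 1) (n : ℕ) :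
    HasDerivAt (fun t => boxdotPow m n (c t)) ((n + 1 : ℝ) • c') t := by
  induction n with
  | zero => simpa [boxdotPow] using hc
  | succ n ih =>
    convert hc.boxdot ih using 1
    · rfl
    rw [ht, boxdotPow_single_last, boxdot_single_last_right, boxdot_single_last_left]
    push_cast
    module

lemma boxdot_single_penultimate (n : ℕ) (a : Fin (n + 3) → ℝ) :
    boxdot (n + 2) a (Pi.single (Fin.last (n + 1)).castSucc 1) (Fin.last (n + 1)).castSucc =
      a (Fin.last (n + 2)) + a (Fin.last (n + 1)).castSucc / numDim (n + 2) (n + 1) := by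
  rw [boxdot_single_right, Fin.sum_univ_castSucc, Fin.sum_univ_castSucc]
  have hlt (i : Fin (n + 1)) : Vprob (n + 2) i (n + 1) (n + 1) = 0 :=
    Vprob_eq_zero_of_fst_lt _ (by omega) i.is_lt
  simp [hlt, Vprob_self, Vprob_fst_full, div_eq_inv_mul, add_comm]

end Boxdot

section DensityEvolution

variable {m : ℕ}

lemma differentiable_tilde : Differentiable ℝ (tilde m) := by
  have hext (j : ℕ) : Differentiable ℝ (fun x => extSeq m x j) := by
    unfold extSeq
    split_ifs <;> fun_prop
  exact differentiable_pi.2 fun i => (hext i).sub (hext (i + 1))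

lemma differentiable_fFun (dv : ℕ) (ε : ℝ) (s : Fin m) :
    Differentiable ℝ (fun y => fFun m dv ε y s) := by
  have h : Differentiable ℝ (fun y => fcirc m dv ε (tilde m y)) :=
    differentiable_boxdot (differentiable_const _)
      ((differentiable_boxdotPow _).comp differentiable_tilde)
  unfold fFun
  exact Differentiable.fun_sum fun k _ => by
    split_ifs
    exacts [differentiable_pi.1 h k, differentiable_const 0]

lemma extSeq_one_add_smul_single (τ : Fin m) (h : ℝ) (j : ℕ) :
    extSeq m (1 + h • Pi.single τ 1) j =
      (if j ≤ m then 1 else 0) + h * if j = τ + 1 then 1 else 0 := by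
  unfold extSeq
  split_ifs <;> simp_all [Pi.single_apply, Fin.ext_iff]; omega

lemma tilde_one_add_smul_single (τ : Fin m) (h : ℝ) :
    tilde m (1 + h • Pi.single τ 1) =
      Pi.single (Fin.last m) 1 + h • (Pi.single τ.succ 1 - Pi.single τ.castSucc 1) := by
  ext i
  simp only [tilde, extSeq_one_add_smul_single, Pi.add_apply, Pi.smul_apply, Pi.sub_apply,
    Pi.single_apply, Fin.ext_iff, Fin.val_last, Fin.val_succ, Fin.val_castSucc, smul_eq_mul]
  have := i.is_lt
  split_ifs <;> first | omega | ring

lemma hasDerivAt_fFun_one_add_smul_single (dv : ℕ) (ε : ℝ) (s τ : Fin m) :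
    HasDerivAt (fun h : ℝ => fFun m dv ε (1 + h • Pi.single τ 1) s)
      (((dv - 2 : ℕ) + 1 : ℝ) * ∑ k : Fin (m + 1), if (s : ℕ) + 1 ≤ k then
        boxdot m (pcirc m ε) (Pi.single τ.succ 1 - Pi.single τ.castSucc 1) k else 0) 0 := by
  set w : Fin (m + 1) → ℝ := Pi.single τ.succ 1 - Pi.single τ.castSucc 1
  have hline : HasDerivAt (fun h : ℝ => tilde m (1 + h • Pi.single τ 1)) w 0 := by
    simp_rw [tilde_one_add_smul_single]
    simpa using ((hasDerivAt_id (0 : ℝ)).smul_const w).const_add (Pi.single (Fin.last m) 1)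
  have hpow := hline.boxdotPow_of_eq_single_last
    (by simpa using tilde_one_add_smul_single τ 0) (dv - 2)
  have hf := hasDerivAt_pi.1 ((hasDerivAt_const (0 : ℝ) (pcirc m ε)).boxdot hpow)
  rw [Finset.mul_sum]
  refine HasDerivAt.fun_sum fun k _ => ?_
  split_ifs
  · simpa [fcirc, boxdot_zero_left, boxdot_smul_right] using hf k
  · simp [hasDerivAt_const]

lemma hasDerivAt_fFun_last_of_castSucc (dv : ℕ) (ε : ℝ) (τ : Fin m) :
    HasDerivAt (fun h : ℝ => fFun (m + 1) dv ε (1 + h • Pi.single τ.castSucc 1) (Fin.last m))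
      0 0 := by
  convert hasDerivAt_fFun_one_add_smul_single dv ε (Fin.last m) τ.castSucc using 1
  have hne (i : Fin m) : ¬ m < (i : ℕ) := by omega
  have hτ : m + 1 ≠ (τ : ℕ) := by omega
  simp [Fin.sum_univ_castSucc, hne, hτ, boxdot_apply_last, Fin.ext_iff,
    τ.is_lt.ne']

lemma hasDerivAt_fFun_castSucc_of_last (n dv : ℕ) (ε : ℝ) :
    HasDerivAt (fun h : ℝ =>
        fFun (n + 2) dv ε (1 + h • Pi.single (Fin.last (n + 1)) 1) (Fin.last n).castSucc)
      (((dv - 2 : ℕ) + 1 : ℝ) * (pcirc (n + 2) ε (Fin.last (n + 1)).castSucc *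
        (1 - (numDim (n + 2) (n + 1) : ℝ)⁻¹))) 0 := by
  convert hasDerivAt_fFun_one_add_smul_single dv ε (Fin.last n).castSucc (Fin.last (n + 1))
    using 2
  rw [Fin.sum_univ_castSucc, Fin.sum_univ_castSucc,
    Finset.sum_eq_zero fun i _ => if_neg (by simp; omega), if_pos (by simp), if_pos (by simp),
    Fin.succ_last, boxdot_sub_right, Pi.sub_apply, Pi.sub_apply, boxdot_single_last_right,
    boxdot_single_penultimate, boxdot_apply_last, Pi.single_eq_of_ne (Fin.castSucc_lt_last _).ne']
  ring

end DensityEvolution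

lemma Yset_eq_pi (m : ℕ) : Yset m = Set.univ.pi fun _ => Set.Icc 0 1 := by
  ext
  simp only [Yset, Set.mem_univ_pi, Set.mem_Icc, Set.mem_ofPred_eq]

lemma convex_Yset (m : ℕ) : Convex ℝ (Yset m) :=
  Yset_eq_pi m ▸ convex_pi fun _ _ => convex_Icc 0 1

lemma interior_Yset_nonempty (m : ℕ) : (interior (Yset m)).Nonempty := by
  simp only [Yset_eq_pi, interior_pi_set Set.finite_univ, interior_Icc, Set.univ_pi_nonempty_iff,
    Set.nonempty_Ioo]
  exact fun _ => zero_lt_one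

lemma one_mem_Yset (m : ℕ) : (1 : Fin m → ℝ) ∈ Yset m :=
  fun _ => ⟨zero_le_one, le_rfl⟩

lemma pcirc_pos {m : ℕ} {ε : ℝ} (hε0 : 0 < ε) (hε1 : ε < 1) (i : Fin (m + 1)) :
    0 < pcirc m ε i := by
  have := Nat.choose_pos (Nat.lt_succ_iff.1 i.is_lt)
  unfold pcirc
  have : 0 < 1 - ε := by linarith
  positivity

theorem no_diagonal_D_general (m dv dc : ℕ) (hm : 2 ≤ m)
    (ε : ℝ) (hε0 : 0 < ε) (hε1 : ε < 1) :
    ¬ ∃ (d : Fin m → ℝ) (F G : (Fin m → ℝ) → ℝ),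
        (∀ i, 0 < d i) ∧ F 0 = 0 ∧ G 0 = 0 ∧
        (∀ y ∈ Yset m,
          HasFDerivAt F (rowDeriv m (fun s => fFun m dv ε y s * d s)) y) ∧
        (∀ x ∈ Yset m,
          HasFDerivAt G (rowDeriv m (fun s => gFun m dc x s * d s)) x) := by
  rintro ⟨d, F, G, hd, -, -, hF, -⟩
  obtain ⟨n, rfl⟩ : ∃ n, m = n + 2 := ⟨m - 2, by omega⟩
  have hc : DifferentiableAt ℝ (fun y s => fFun (n + 2) dv ε y s * d s) 1 :=
    differentiableAt_pi.2 fun s => ((differentiable_fFun dv ε s).mul_const (d s)).differentiableAt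
  have hsymm := (convex_Yset _).mixed_partial_eq_of_hasFDerivAt_rowDeriv (interior_Yset_nonempty _)
    hF (one_mem_Yset _) hc ((hasDerivAt_fFun_castSucc_of_last n dv ε).mul_const _)
    ((hasDerivAt_fFun_last_of_castSucc dv ε (Fin.last n)).mul_const _)
  have hN : (numDim (n + 2) (n + 1) : ℝ)⁻¹ < 1 :=
    inv_lt_one_of_one_lt₀ (by exact_mod_cast two_le_numDim_hyperplane n)
  rw [zero_mul] at hsymm
  exact (mul_pos (mul_pos (by positivity) (mul_pos (pcirc_pos hε0 hε1 _) (sub_pos.2 hN)))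
    (hd _)).ne' hsymm

/-- **Proposition 1: nonexistence for diagonal `D`.** For `m ≥ 2` and
`ε ∈ (0,1)`, there is no diagonal matrix `D` with strictly positive diagonal entries
admitting differentiable `F, G` with gradients `f(·; ε)·D` and `g(·)·D` on `Y`. -/
theorem no_diagonal_D (m dv dc : ℕ) (hm : 2 ≤ m) (hdv : 2 ≤ dv) (hdc : 2 ≤ dc)
    (ε : ℝ) (hε0 : 0 < ε) (hε1 : ε < 1) :
    ¬ ∃ (d : Fin m → ℝ) (F G : (Fin m → ℝ) → ℝ),
        (∀ i, 0 < d i) ∧ F 0 = 0 ∧ G 0 = 0 ∧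
        (∀ y ∈ Yset m,
          HasFDerivAt F (rowDeriv m (fun s => fFun m dv ε y s * d s)) y) ∧
        (∀ x ∈ Yset m,
          HasFDerivAt G (rowDeriv m (fun s => gFun m dc x s * d s)) x) :=
  no_diagonal_D_general m dv dc hm ε hε0 hε1

end
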